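/- Mutation of compatible pairs is an involution: let (B̃, Λ) be a compatible pair of type S, k ∈ {1,…,n}, and let (B̃', Λ') := μ_k(B̃, Λ), i.e. B̃' = μ_k(B̃) and Λ' = (E_{k,ε}^{B̃})ᵀ Λ E_{k,ε}^{B̃} (for either sign ε). Then μ_k(B̃', Λ') = (B̃, Λ); in particular (E_{k,ε'}^{B̃'})ᵀ Λ' E_{k,ε'}^{B̃'} = Λ for either sign ε'. -/
import Mathlib


open Matrix BigOperators

namespace ClusterF

/-- The positive part `[a]₊ = max a 0` of an integer. -/
def pp (a : ℤ) : ℤ := max a 0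

variable {m n : ℕ}

/-- The principal part (top `n × n` submatrix) of an `m × n` matrix. -/
def prin (h : n ≤ m) (B : Matrix (Fin m) (Fin n) ℤ) : Matrix (Fin n) (Fin n) ℤ :=
  Matrix.of fun i j => B (Fin.castLE h i) j

/-- `B̃` is a mutation matrix: its principal part is skew-symmetrizable, i.e. there is a
diagonal integer matrix with positive diagonal entries `S` with `S * B` skew-symmetric. -/
def IsMutationMatrix (h : n ≤ m) (B : Matrix (Fin m) (Fin n) ℤ) : Prop :=
  ∃ S : Fin n → ℤ, (∀ i, 0 < S i) ∧
    (Matrix.diagonal S * prin h B)ᵀ = -(Matrix.diagonal S * prin h B)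

/-- The mutation `μ_k(B̃)` of an `m × n` matrix in direction `k`. -/
def mutB (h : n ≤ m) (B : Matrix (Fin m) (Fin n) ℤ) (k : Fin n) :
    Matrix (Fin m) (Fin n) ℤ :=
  Matrix.of fun i j =>
    if i = Fin.castLE h k ∨ j = k then -(B i j)
    else B i j + pp (B i k) * pp (B (Fin.castLE h k) j)
      - pp (-(B i k)) * pp (-(B (Fin.castLE h k) j))

/-- The `m × m` matrix `E_{k,ε}^{B̃}`: the identity with its `k`-th column replaced by the
column with entry `-1` in position `k` and `[-ε b_{ik}]₊` in positions `i ≠ k`. -/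
def Emat (h : n ≤ m) (B : Matrix (Fin m) (Fin n) ℤ) (k : Fin n) (ε : ℤ) :
    Matrix (Fin m) (Fin m) ℤ :=
  Matrix.of fun i j =>
    if j = Fin.castLE h k then
      (if i = Fin.castLE h k then -1 else pp (-(ε * B i k)))
    else if i = j then 1 else 0

/-- The `n × n` matrix `F_{k,ε}^{B̃}`: the identity with its `k`-th row replaced by the
row with entry `-1` in position `k` and `[ε b_{ki}]₊` in positions `i ≠ k`. -/
def Fmat (h : n ≤ m) (B : Matrix (Fin m) (Fin n) ℤ) (k : Fin n) (ε : ℤ) :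
    Matrix (Fin n) (Fin n) ℤ :=
  Matrix.of fun i j =>
    if i = k then (if j = k then -1 else pp (ε * B (Fin.castLE h k) j))
    else if i = j then 1 else 0

/-- The `n × m` matrix `(S | 0)`. -/
def typeMat (h : n ≤ m) (S : Fin n → ℤ) : Matrix (Fin n) (Fin m) ℤ :=
  Matrix.of fun i j => if j = Fin.castLE h i then S i else 0

/-- The Y-tropical mutation of `g ∈ ℤ^m` in direction `k`, with respect to `B̂ = -B̃ᵀ`
(so `b̂_{ki} = -b_{ik}`):  `g'_k = -g_k` and
`g'_i = g_i + [b̂_{ki}]₊ g_k - b̂_{ki}[g_k]₊` for `i ≠ k`. -/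
def yTrop (h : n ≤ m) (B : Matrix (Fin m) (Fin n) ℤ) (k : Fin n) (g : Fin m → ℤ) :
    Fin m → ℤ :=
  fun i =>
    if i = Fin.castLE h k then -(g (Fin.castLE h k))
    else g i + pp (-(B i k)) * g (Fin.castLE h k) - (-(B i k)) * pp (g (Fin.castLE h k))

/-- The X-tropical mutation of `a ∈ ℤ^m` in direction `k` with respect to `B̃`:
`a'_i = a_i` for `i ≠ k` and
`a'_k = -a_k + max (Σ_j [b_{jk}]₊ a_j) (Σ_j [-b_{jk}]₊ a_j)`. -/
def xTrop (h : n ≤ m) (B : Matrix (Fin m) (Fin n) ℤ) (k : Fin n) (a : Fin m → ℤ) :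
    Fin m → ℤ :=
  fun i =>
    if i = Fin.castLE h k then
      -(a i) + max (∑ j, pp (B j k) * a j) (∑ j, pp (-(B j k)) * a j)
    else a i


/-- Auxiliary matrix `D`: column `k` is `-B·e_k`, everything else `0`. -/
def Dmat (h : n ≤ m) (B : Matrix (Fin m) (Fin n) ℤ) (k : Fin n) :
    Matrix (Fin m) (Fin m) ℤ :=
  Matrix.of fun i j => if j = Fin.castLE h k then -(B i k) else 0

/-- Auxiliary matrix `P = e_k e_kᵀ`. -/
def Pmat (h : n ≤ m) (k : Fin n) : Matrix (Fin m) (Fin m) ℤ :=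
  Matrix.of fun i j =>
    if i = Fin.castLE h k ∧ j = Fin.castLE h k then (1 : ℤ) else 0

lemma mutB_mutB (h : n ≤ m) (B : Matrix (Fin m) (Fin n) ℤ) (k : Fin n) :
    mutB h (mutB h B k) k = B := by
  ext i j
  by_cases hik : i = Fin.castLE h k <;> by_cases hjk : j = k <;>
    simp [mutB, hik, hjk] <;> ring

lemma Emat_mutB (h : n ≤ m) (B : Matrix (Fin m) (Fin n) ℤ) (k : Fin n) (ε : ℤ) :
    Emat h (mutB h B k) k ε = Emat h B k (-ε) := by
  ext i j
  by_cases hj : j = Fin.castLE h k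
  · by_cases hi : i = Fin.castLE h k
    · simp [Emat, hi, hj]
    · simp [Emat, mutB, hi, hj]
  · simp [Emat, hj]

lemma Emat_sq (h : n ≤ m) (B : Matrix (Fin m) (Fin n) ℤ) (k : Fin n) (ε : ℤ) :
    Emat h B k ε * Emat h B k ε = 1 := by
  ext i j
  rw [Matrix.mul_apply]
  by_cases hj : j = Fin.castLE h k
  · subst hj
    by_cases hi : i = Fin.castLE h k
    · subst hi
      rw [Finset.sum_congr rfl (fun q _ =>
        show Emat h B k ε (Fin.castLE h k) q * Emat h B k ε q (Fin.castLE h k)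
            = if q = Fin.castLE h k then 1 else 0 by
          by_cases hq : q = Fin.castLE h k
          · simp [Emat, hq]
          · simp [Emat, hq, Ne.symm hq])]
      simp [Matrix.one_apply]
    · rw [Finset.sum_congr rfl (fun q _ =>
        show Emat h B k ε i q * Emat h B k ε q (Fin.castLE h k)
            = (if q = Fin.castLE h k then -pp (-(ε * B i k)) else 0)
              + (if q = i then pp (-(ε * B q k)) else 0) by
          by_cases hq : q = Fin.castLE h k
          · subst hq
            simp [Emat, hi, Ne.symm hi]
          · by_cases hiq : q = i
            · subst hiq
              simp [Emat, hq, hi]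
            · simp [Emat, hq, hiq, Ne.symm hiq])]
      rw [Finset.sum_add_distrib]
      simp [Matrix.one_apply, hi]
  · rw [Finset.sum_congr rfl (fun q _ =>
      show Emat h B k ε i q * Emat h B k ε q j
          = if q = j then Emat h B k ε i j else 0 by
        by_cases hq : q = j
        · subst hq; simp [Emat, hj]
        · simp [Emat, hj, hq])]
    simp [Matrix.one_apply, Emat, hj]

lemma diag_zero (h : n ≤ m) (B : Matrix (Fin m) (Fin n) ℤ)
    (Λ : Matrix (Fin m) (Fin m) ℤ) (S : Fin n → ℤ)
    (hΛ : Λᵀ = -Λ) (hS : ∀ i, 0 < S i) (hcomp : Bᵀ * Λ = typeMat h S)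
    (k : Fin n) : B (Fin.castLE h k) k = 0 := by
  have e1 : (Bᵀ * Λ * B) k k = S k * B (Fin.castLE h k) k := by
    rw [hcomp]
    simp [Matrix.mul_apply, typeMat, ite_mul]
  have e2 : (Bᵀ * Λ * B)ᵀ = -(Bᵀ * Λ * B) := by
    rw [Matrix.transpose_mul, Matrix.transpose_mul, Matrix.transpose_transpose, hΛ]
    simp [Matrix.neg_mul, Matrix.mul_neg, Matrix.mul_assoc]
  have e3 := congrFun (congrFun e2 k) k
  simp only [Matrix.transpose_apply, Matrix.neg_apply] at e3
  rw [e1] at e3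
  have hz : S k * B (Fin.castLE h k) k = 0 := by linarith
  rcases mul_eq_zero.mp hz with hz | hz
  · exact absurd hz (hS k).ne'
  · exact hz

lemma Emat_decomp (h : n ≤ m) (B : Matrix (Fin m) (Fin n) ℤ) (k : Fin n)
    (hBkk : B (Fin.castLE h k) k = 0) :
    Emat h B k 1 = Emat h B k (-1) + Dmat h B k := by
  ext i j
  by_cases hj : j = Fin.castLE h k
  · by_cases hi : i = Fin.castLE h k
    · simp [Emat, Dmat, hi, hj, hBkk]
    · simp [Emat, Dmat, hi, hj, pp]
      omega
  · simp [Emat, Dmat, hj]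

lemma DT_mul (h : n ≤ m) (B : Matrix (Fin m) (Fin n) ℤ)
    (Λ : Matrix (Fin m) (Fin m) ℤ) (S : Fin n → ℤ)
    (hcomp : Bᵀ * Λ = typeMat h S) (k : Fin n) :
    (Dmat h B k)ᵀ * Λ = (-(S k)) • Pmat h k := by
  ext i j
  rw [Matrix.mul_apply]
  have hc := congrFun (congrFun hcomp k) j
  simp only [Matrix.mul_apply, Matrix.transpose_apply, typeMat, Matrix.of_apply] at hc
  by_cases hi : i = Fin.castLE h k
  · simp only [Matrix.transpose_apply, Dmat, Matrix.of_apply, hi, if_true, if_pos rfl,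
      neg_mul]
    rw [Finset.sum_neg_distrib, hc]
    by_cases hjk : j = Fin.castLE h k <;> simp [Pmat, hi, hjk]
  · simp [Dmat, hi, Pmat]

lemma Lam_mul_D (h : n ≤ m) (B : Matrix (Fin m) (Fin n) ℤ)
    (Λ : Matrix (Fin m) (Fin m) ℤ) (S : Fin n → ℤ)
    (hΛ : Λᵀ = -Λ) (hcomp : Bᵀ * Λ = typeMat h S) (k : Fin n) :
    Λ * Dmat h B k = (S k) • Pmat h k := by
  ext i j
  rw [Matrix.mul_apply]
  have hc := congrFun (congrFun hcomp k) i
  simp only [Matrix.mul_apply, Matrix.transpose_apply, typeMat, Matrix.of_apply] at hc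
  have hΛe : ∀ p q : Fin m, Λ p q = -(Λ q p) := by
    intro p q
    have := congrFun (congrFun hΛ q) p
    simpa using this
  by_cases hj : j = Fin.castLE h k
  · rw [Finset.sum_congr rfl (fun q _ =>
      show Λ i q * Dmat h B k q j = B q k * Λ q i by
        simp only [Dmat, Matrix.of_apply, hj, if_true, if_pos rfl]
        rw [hΛe i q]; ring)]
    rw [hc]
    by_cases hik : i = Fin.castLE h k <;> simp [Pmat, hj, hik]
  · simp [Dmat, hj, Pmat]

lemma P_mul_E (h : n ≤ m) (B : Matrix (Fin m) (Fin n) ℤ) (k : Fin n) (ε : ℤ) :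
    Pmat h k * Emat h B k ε = -(Pmat h k) := by
  ext i j
  rw [Matrix.mul_apply]
  by_cases hi : i = Fin.castLE h k
  · rw [Finset.sum_congr rfl (fun q _ =>
      show Pmat h k i q * Emat h B k ε q j
          = if q = Fin.castLE h k then Emat h B k ε (Fin.castLE h k) j else 0 by
        by_cases hq : q = Fin.castLE h k <;> simp [Pmat, hi, hq])]
    rw [Finset.sum_ite_eq' Finset.univ (Fin.castLE h k)]
    by_cases hj : j = Fin.castLE h k
    · simp [Emat, Pmat, hi, hj]
    · simp [Emat, Pmat, hi, hj, Ne.symm hj]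
  · simp [Pmat, hi]

lemma ET_mul_P (h : n ≤ m) (B : Matrix (Fin m) (Fin n) ℤ) (k : Fin n) (ε : ℤ) :
    (Emat h B k ε)ᵀ * Pmat h k = -(Pmat h k) := by
  ext i j
  rw [Matrix.mul_apply]
  by_cases hj : j = Fin.castLE h k
  · rw [Finset.sum_congr rfl (fun p _ =>
      show (Emat h B k ε)ᵀ i p * Pmat h k p j
          = if p = Fin.castLE h k then Emat h B k ε (Fin.castLE h k) i else 0 by
        by_cases hp : p = Fin.castLE h k <;> simp [Pmat, hj, hp])]
    rw [Finset.sum_ite_eq' Finset.univ (Fin.castLE h k)]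
    by_cases hi : i = Fin.castLE h k
    · simp [Emat, Pmat, hi, hj]
    · simp [Emat, Pmat, hi, hj, Ne.symm hi]
  · simp [Pmat, hj]

lemma P_mul_D (h : n ≤ m) (B : Matrix (Fin m) (Fin n) ℤ) (k : Fin n)
    (hBkk : B (Fin.castLE h k) k = 0) :
    Pmat h k * Dmat h B k = 0 := by
  ext i j
  rw [Matrix.mul_apply]
  by_cases hi : i = Fin.castLE h k
  · rw [Finset.sum_congr rfl (fun q _ =>
      show Pmat h k i q * Dmat h B k q j
          = if q = Fin.castLE h k then Dmat h B k (Fin.castLE h k) j else 0 by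
        by_cases hq : q = Fin.castLE h k <;> simp [Pmat, hi, hq])]
    rw [Finset.sum_ite_eq' Finset.univ (Fin.castLE h k)]
    by_cases hj : j = Fin.castLE h k <;> simp [Dmat, hj, hBkk]
  · simp [Pmat, hi]

lemma conj_indep (h : n ≤ m) (B : Matrix (Fin m) (Fin n) ℤ)
    (Λ : Matrix (Fin m) (Fin m) ℤ) (S : Fin n → ℤ)
    (hΛ : Λᵀ = -Λ) (hS : ∀ i, 0 < S i) (hcomp : Bᵀ * Λ = typeMat h S) (k : Fin n) :
    (Emat h B k 1)ᵀ * Λ * Emat h B k 1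
      = (Emat h B k (-1))ᵀ * Λ * Emat h B k (-1) := by
  have hBkk := diag_zero h B Λ S hΛ hS hcomp k
  rw [Emat_decomp h B k hBkk]
  rw [Matrix.transpose_add, Matrix.add_mul, Matrix.add_mul, Matrix.mul_add,
    Matrix.mul_add]
  rw [DT_mul h B Λ S hcomp k]
  rw [Matrix.mul_assoc ((Emat h B k (-1))ᵀ) Λ (Dmat h B k),
    Lam_mul_D h B Λ S hΛ hcomp k]
  rw [Matrix.smul_mul, Matrix.smul_mul, Matrix.mul_smul,
    P_mul_E h B k (-1), P_mul_D h B k hBkk, ET_mul_P h B k (-1)]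
  simp [smul_neg, neg_smul]

lemma conj_eq (h : n ≤ m) (B : Matrix (Fin m) (Fin n) ℤ)
    (Λ : Matrix (Fin m) (Fin m) ℤ) (S : Fin n → ℤ)
    (hΛ : Λᵀ = -Λ) (hS : ∀ i, 0 < S i) (hcomp : Bᵀ * Λ = typeMat h S) (k : Fin n)
    (ε : ℤ) (hε : ε = 1 ∨ ε = -1) :
    (Emat h B k ε)ᵀ * Λ * Emat h B k ε
      = (Emat h B k 1)ᵀ * Λ * Emat h B k 1 := by
  rcases hε with rfl | rfl
  · rfl
  · exact (conj_indep h B Λ S hΛ hS hcomp k).symm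

/-- Mutation of compatible pairs is an involution: with
(B̃', Λ') = μ_k(B̃, Λ) one has μ_k(B̃', Λ') = (B̃, Λ), i.e. μ_k(μ_k(B̃)) = B̃ and
(E_{k,ε'}^{B̃'})ᵀ Λ' E_{k,ε'}^{B̃'} = Λ for either sign ε'. -/
theorem stmt9 {m n : ℕ} (h : n ≤ m) (B : Matrix (Fin m) (Fin n) ℤ)
    (Λ : Matrix (Fin m) (Fin m) ℤ) (S : Fin n → ℤ)
    (hΛ : Λᵀ = -Λ) (hS : ∀ i, 0 < S i) (hcomp : Bᵀ * Λ = typeMat h S)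
    (k : Fin n) (ε : ℤ) (hε : ε = 1 ∨ ε = -1)
    (B' : Matrix (Fin m) (Fin n) ℤ) (hB' : B' = mutB h B k)
    (Λ' : Matrix (Fin m) (Fin m) ℤ)
    (hΛ' : Λ' = (Emat h B k ε)ᵀ * Λ * Emat h B k ε) :
    mutB h B' k = B ∧
      ∀ ε' : ℤ, ε' = 1 ∨ ε' = -1 →
        (Emat h B' k ε')ᵀ * Λ' * Emat h B' k ε' = Λ := by
  constructor
  · rw [hB']; exact mutB_mutB h B k
  · intro ε' hε'
    have hE' : Emat h B' k ε' = Emat h B k (-ε') := by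
      rw [hB']; exact Emat_mutB h B k ε'
    have hsign : -ε' = 1 ∨ -ε' = -1 := by
      rcases hε' with rfl | rfl
      · right; rfl
      · left; rfl
    have hΛ'2 : Λ' = (Emat h B k (-ε'))ᵀ * Λ * Emat h B k (-ε') := by
      rw [hΛ', conj_eq h B Λ S hΛ hS hcomp k ε hε,
        conj_eq h B Λ S hΛ hS hcomp k (-ε') hsign]
    rw [hE', hΛ'2]
    have hsq := Emat_sq h B k (-ε')
    calc (Emat h B k (-ε'))ᵀ * ((Emat h B k (-ε'))ᵀ * Λ * Emat h B k (-ε'))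
          * Emat h B k (-ε')
        = (Emat h B k (-ε') * Emat h B k (-ε'))ᵀ * Λ
            * (Emat h B k (-ε') * Emat h B k (-ε')) := by
          rw [Matrix.transpose_mul]
          simp only [Matrix.mul_assoc]
      _ = Λ := by rw [hsq]; simp


end ClusterF
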